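/- Let {U_i}_{i ∈ I} be a finite set of d×d unitary matrices with tr(U_i† U_j) = 0 for all i ≠ j, let r_i ∈ ℝ, and let T(X) = ∑_{i ∈ I} r_i U_i X U_i†. Then the trace norm of the Choi matrix of T satisfies ‖J_T‖₁ = d ∑_{i ∈ I} |r_i|. -/

import Mathlib

open scoped Kronecker ComplexOrder
open Matrix

noncomputable section

/-- `id_k ⊗ N` applied blockwise. -/
def idTensor {n m : Type*} (k : Type*)
    (N : Matrix n n ℂ → Matrix m m ℂ)
    (M : Matrix (k × n) (k × n) ℂ) : Matrix (k × m) (k × m) ℂ :=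
  Matrix.of fun p q => N (Matrix.of fun a b => M (p.1, a) (q.1, b)) p.2 q.2

/-- Trace-preserving. -/
def IsTP {n m : Type*} [Fintype n] [Fintype m]
    (N : Matrix n n ℂ → Matrix m m ℂ) : Prop :=
  ∀ X, (N X).trace = X.trace

/-- Hermitian-preserving. -/
def IsHP {n m : Type*} (N : Matrix n n ℂ → Matrix m m ℂ) : Prop :=
  ∀ X, X.IsHermitian → (N X).IsHermitian

/-- Completely positive: for every `k`, `id_k ⊗ N` preserves positive semidefiniteness. -/
def IsCP {n m : Type*} [Fintype n] [Fintype m]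
    (N : Matrix n n ℂ → Matrix m m ℂ) : Prop :=
  ∀ (k : ℕ) (M : Matrix (Fin k × n) (Fin k × n) ℂ),
    M.PosSemidef → (idTensor (Fin k) N M).PosSemidef

/-- Completely positive and trace-preserving (quantum channel). -/
def IsCPTP {n m : Type*} [Fintype n] [Fintype m]
    (N : Matrix n n ℂ → Matrix m m ℂ) : Prop :=
  IsLinearMap ℂ N ∧ IsCP N ∧ IsTP N

/-- Completely positive and trace non-increasing. -/
def IsCPTN {n m : Type*} [Fintype n] [Fintype m]
    (N : Matrix n n ℂ → Matrix m m ℂ) : Prop :=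
  IsLinearMap ℂ N ∧ IsCP N ∧ ∀ X : Matrix n n ℂ, X.PosSemidef → (N X).trace ≤ X.trace

/-- Costs of finite quasiprobability decompositions of `N` into CPTP maps. -/
def decompCosts {n m : Type*} [Fintype n] [Fintype m]
    (N : Matrix n n ℂ → Matrix m m ℂ) : Set ℝ :=
  { c | ∃ (s : ℕ) (η : Fin s → ℝ) (O : Fin s → (Matrix n n ℂ → Matrix m m ℂ)),
      (∀ i, IsCPTP (O i)) ∧ (∀ X, N X = ∑ i, (η i : ℂ) • O i X) ∧ c = ∑ i, |η i| }

/-- The physical implementability `ν(N)`. -/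
noncomputable def nu {n m : Type*} [Fintype n] [Fintype m]
    (N : Matrix n n ℂ → Matrix m m ℂ) : ℝ :=
  Real.logb 2 (sInf (decompCosts N))

/-- The Choi matrix of a linear map. -/
def choiMatrix {n m : Type*} [DecidableEq n]
    (N : Matrix n n ℂ → Matrix m m ℂ) : Matrix (n × m) (n × m) ℂ :=
  Matrix.of fun p q => N (Matrix.single p.1 q.1 1) p.2 q.2

/-- Partial trace over the second tensor factor. -/
def ptraceB {n m : Type*} [Fintype m] (J : Matrix (n × m) (n × m) ℂ) :
    Matrix n n ℂ :=
  Matrix.of fun i j => ∑ a, J (i, a) (j, a)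

/-- The square root of a positive semidefinite matrix (the definition of
`Matrix.PosSemidef.sqrt` in the older Mathlib, which no longer has it). -/
noncomputable def Matrix.PosSemidef.sqrt {n 𝕜 : Type*} [Fintype n] [DecidableEq n] [RCLike 𝕜]
    {A : Matrix n n 𝕜} (hA : A.PosSemidef) : Matrix n n 𝕜 :=
  hA.1.eigenvectorUnitary.1 * diagonal ((↑) ∘ (√·) ∘ hA.1.eigenvalues) *
    (star hA.1.eigenvectorUnitary : Matrix n n 𝕜)

/-- The trace norm of a matrix. -/
noncomputable def traceNorm {k : Type*} [Fintype k] [DecidableEq k]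
    (X : Matrix k k ℂ) : ℝ :=
  ((Matrix.posSemidef_conjTranspose_mul_self X).sqrt.trace).re

/-- Tensor product of two maps. -/
def tensorMap {n₁ n₂ m₂ : Type*} [Fintype n₁] [DecidableEq n₁]
    (M : Matrix n₁ n₁ ℂ → Matrix n₁ n₁ ℂ) (N : Matrix n₂ n₂ ℂ → Matrix m₂ m₂ ℂ)
    (X : Matrix (n₁ × n₂) (n₁ × n₂) ℂ) : Matrix (n₁ × m₂) (n₁ × m₂) ℂ :=
  ∑ i : n₁, ∑ j : n₁,
    (M (Matrix.single i j 1)) ⊗ₖ (N (Matrix.of fun a b => X (i, a) (j, b)))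

/-!
With `wᵢ = vec Uᵢ`, the Choi matrix of `X ↦ Uᵢ X Uᵢ†` is the rank-one matrix `wᵢ wᵢ†`, and the
trace orthogonality of the unitaries says that the `wᵢ` are orthogonal vectors of squared norm `d`.
So `J_T = ∑ rᵢ wᵢ wᵢ†`, and `S = ∑ |rᵢ| wᵢ wᵢ†` is positive semidefinite with `S² = J_T† J_T`;
uniqueness of the positive square root gives `‖J_T‖₁ = tr S = d ∑ |rᵢ|`.
-/

open scoped MatrixOrder in
theorem Matrix.PosSemidef.sqrt_eq_cfcSqrt {n 𝕜 : Type*} [Fintype n] [DecidableEq n] [RCLike 𝕜]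
    {A : Matrix n n 𝕜} (hA : A.PosSemidef) : hA.sqrt = CFC.sqrt A := by
  rw [CFC.sqrt_eq_cfc, cfc_nnreal_eq_real _ A, hA.1.cfc_eq]
  simp only [Matrix.PosSemidef.sqrt, IsHermitian.cfc, Unitary.conjStarAlgAut_apply]
  congr 3
  funext i
  simp [hA.eigenvalues_nonneg i]

open scoped MatrixOrder in
theorem traceNorm_eq_re_trace_of_mul_self {k : Type*} [Fintype k] [DecidableEq k]
    {X S : Matrix k k ℂ} (hS : S.PosSemidef) (h : S * S = Xᴴ * X) :
    traceNorm X = S.trace.re := by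
  rw [traceNorm, PosSemidef.sqrt_eq_cfcSqrt, CFC.sqrt_unique h hS.nonneg]

section OrthogonalRankOne

variable {n ι : Type*} [Fintype ι] {v : ι → n → ℂ}

theorem isHermitian_sum_ofReal_smul_vecMulVec (r : ι → ℝ) :
    (∑ i, (r i : ℂ) • vecMulVec (v i) (star (v i))).IsHermitian := by
  simp [IsHermitian, conjTranspose_sum, conjTranspose_smul]

variable [Fintype n]

theorem sum_smul_vecMulVec_mul_sum_smul_vecMulVec
    (hv : Pairwise fun i j => star (v i) ⬝ᵥ v j = 0) (c e : ι → ℂ) :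
    (∑ i, c i • vecMulVec (v i) (star (v i))) * ∑ j, e j • vecMulVec (v j) (star (v j)) =
      ∑ i, (c i * e i * (star (v i) ⬝ᵥ v i)) • vecMulVec (v i) (star (v i)) := by
  simp_rw [Finset.sum_mul, Finset.mul_sum, smul_mul_smul_comm, vecMulVec_mul_vecMulVec]
  refine Finset.sum_congr rfl fun i _ => ?_
  rw [Finset.sum_eq_single i (fun j _ hji => by simp [hv (Ne.symm hji)]) (by simp),
    vecMulVec_smul, smul_smul]

theorem posSemidef_sum_ofReal_smul_vecMulVec {r : ι → ℝ} (hr : ∀ i, 0 ≤ r i) :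
    (∑ i, (r i : ℂ) • vecMulVec (v i) (star (v i))).PosSemidef :=
  posSemidef_sum _ fun i _ =>
    (posSemidef_vecMulVec_self_star (v i)).smul (Complex.zero_le_real.mpr (hr i))

variable [DecidableEq n]

theorem traceNorm_sum_ofReal_smul_vecMulVec
    (hv : Pairwise fun i j => star (v i) ⬝ᵥ v j = 0) (r : ι → ℝ) :
    traceNorm (∑ i, (r i : ℂ) • vecMulVec (v i) (star (v i))) =
      ∑ i, |r i| * (star (v i) ⬝ᵥ v i).re := by
  have hS := posSemidef_sum_ofReal_smul_vecMulVec (v := v) fun i => abs_nonneg (r i)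
  rw [traceNorm_eq_re_trace_of_mul_self hS, trace_sum]
  · simp [trace_smul, dotProduct_comm (v _)]
  · rw [(isHermitian_sum_ofReal_smul_vecMulVec r).eq,
      sum_smul_vecMulVec_mul_sum_smul_vecMulVec hv, sum_smul_vecMulVec_mul_sum_smul_vecMulVec hv]
    simp_rw [← Complex.ofReal_mul, abs_mul_abs_self]

end OrthogonalRankOne

theorem choiMatrix_sum_smul {n m ι : Type*} [DecidableEq n] [Fintype ι]
    (c : ι → ℂ) (N : ι → Matrix n n ℂ → Matrix m m ℂ) :
    choiMatrix (fun X => ∑ i, c i • N i X) = ∑ i, c i • choiMatrix (N i) := by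
  ext p q
  simp [choiMatrix, Matrix.sum_apply]

theorem choiMatrix_conj {n m : Type*} [Fintype n] [DecidableEq n] (U : Matrix m n ℂ) :
    choiMatrix (fun X => U * X * Uᴴ) = vecMulVec (vec U) (star (vec U)) := by
  ext p q
  simp [choiMatrix, mul_apply, single_apply, vecMulVec_apply, ite_and, ite_mul]

/-- for `T(X) = ∑ᵢ rᵢ Uᵢ X Uᵢ†` with mutually trace-orthogonal unitaries
`Uᵢ` and real coefficients `rᵢ`, the Choi matrix satisfies `‖J_T‖₁ = d ∑ᵢ |rᵢ|`. -/
theorem traceNorm_choi_mixed_unitary {d s : ℕ}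
    (U : Fin s → Matrix (Fin d) (Fin d) ℂ)
    (hU : ∀ i, U i ∈ Matrix.unitaryGroup (Fin d) ℂ)
    (horth : ∀ i j, i ≠ j → ((U i)ᴴ * U j).trace = 0)
    (r : Fin s → ℝ) :
    traceNorm (choiMatrix (fun X => ∑ i, (r i : ℂ) • (U i * X * (U i)ᴴ))) =
      d * ∑ i, |r i| := by
  have hvec_norm : ∀ i, star (vec (U i)) ⬝ᵥ vec (U i) = d := fun i => by
    rw [star_vec_dotProduct_vec, ← star_eq_conjTranspose, mem_unitaryGroup_iff'.mp (hU i)]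
    simp
  have hvec_orth : Pairwise fun i j => star (vec (U i)) ⬝ᵥ vec (U j) = 0 := fun i j hij =>
    (star_vec_dotProduct_vec _ _).trans (horth i j hij)
  simp_rw [choiMatrix_sum_smul, choiMatrix_conj]
  rw [traceNorm_sum_ofReal_smul_vecMulVec hvec_orth, Finset.mul_sum]
  simp [hvec_norm, mul_comm]

end
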